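/- arXiv:2112.00388 — 2 statements merged into one kernel-verified Lean document; each statement's English description precedes it below -/
import Mathlib

section
/- Let C be a ZMod p-submodule of (Fin k → ZMod p) of dimension s, let π be a permutation of Fin k, and let C' := {v ∘ π | v ∈ C}. Let M : Fin s → (Fin k → ZMod p) and M' : Fin s → (Fin k → ZMod p) be families whose members form bases of C and C' respectively. Then the following are equivalent: (1) there exist a : Fin k → (ZMod p)ˣ and b : Fin k → ZMod p such that σ_{a,b,π} normalizes H_C (i.e., σ_{a,b,π} * H_C * σ_{a,b,π}⁻¹ = H_C); (2) there exist an invertible s × s matrix R over ZMod p and d : Fin k → (ZMod p)ˣ such that M' i j = (∑ l, (R⁻¹) i l * M l j) * d j for all i : Fin s and j : Fin k. -/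
def gperm {p k : ℕ} (v : Fin k → ZMod p) : Equiv.Perm (Fin k × ZMod p) :=
  Equiv.prodShear (Equiv.refl (Fin k)) (fun i => Equiv.addRight (v i))

def Hsub {p k : ℕ} (C : Submodule (ZMod p) (Fin k → ZMod p)) :
    Subgroup (Equiv.Perm (Fin k × ZMod p)) where
  carrier := {g | ∃ v ∈ C, g = gperm v}
  one_mem' := ⟨0, C.zero_mem, by ext ⟨i, x⟩ <;> simp [gperm]⟩
  mul_mem' := by
    rintro g h ⟨v, hv, rfl⟩ ⟨w, hw, rfl⟩
    refine ⟨v + w, C.add_mem hv hw, ?_⟩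
    ext ⟨i, x⟩ <;> simp [gperm] <;> ring
  inv_mem' := by
    rintro g ⟨v, hv, rfl⟩
    refine ⟨-v, C.neg_mem hv, ?_⟩
    have h1 : gperm v * gperm (-v) = 1 := by ext ⟨i, x⟩ <;> simp [gperm]
    exact inv_eq_of_mul_eq_one_right h1

def affineEquiv {p : ℕ} (a : (ZMod p)ˣ) (b : ZMod p) : Equiv.Perm (ZMod p) where
  toFun x := (a : ZMod p) * x + b
  invFun y := ((a⁻¹ : (ZMod p)ˣ) : ZMod p) * (y - b)
  left_inv x := by simp
  right_inv y := by simp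

def sigmaPerm {p k : ℕ} (a : Fin k → (ZMod p)ˣ) (b : Fin k → ZMod p)
    (π : Equiv.Perm (Fin k)) : Equiv.Perm (Fin k × ZMod p) :=
  Equiv.prodShear π (fun i => affineEquiv (a i) (b i))

/-!
Conjugation by `σ_{a,b,π}` sends `g_v` to `g_w` with `w ∘ π = a • v`, so `σ_{a,b,π}` normalizes
`H_C` exactly when scaling `C` coordinatewise by `a` gives `C'`; the translation part `b` plays
no role. Writing the scaling as the matrix `diag a`, the rows of `M * diag a` form a basis of
`C • a`, and two bases of the same module differ by an invertible matrix, so `C' = C • d` holds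
exactly when `M' = R⁻¹ * M * diag d` for an invertible `R`.
-/

open Set Submodule

namespace Matrix

variable {R : Type*} [CommRing R] {l m n : Type*} [Fintype m]

theorem span_range_mul (A : Matrix l m R) (B : Matrix m n R) :
    span R (range (A * B).row) = (span R (range A.row)).map B.vecMulLinear := by
  rw [Submodule.map_span, ← Set.range_comp]
  rfl

variable [DecidableEq m]

theorem span_range_isUnit_mul {A : Matrix m m R} (hA : IsUnit A) (B : Matrix m n R) :
    span R (range (A * B).row) = span R (range B.row) := by
  have hA_top : span R (range A.row) = ⊤ := by
    rw [← range_vecMulLinear]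
    exact LinearMap.range_eq_top.mpr (vecMul_surjective_iff_isUnit.mpr hA)
  rw [span_range_mul, hA_top, Submodule.map_top, range_vecMulLinear]

theorem exists_isUnit_eq_mul_of_span_range_eq {A B : Matrix m n R}
    (hA : LinearIndependent R A.row) (hB : LinearIndependent R B.row)
    (h : span R (range A.row) = span R (range B.row)) :
    ∃ S : Matrix m m R, IsUnit S ∧ A = S * B := by
  let bB := Module.Basis.span hB
  let bA := (Module.Basis.span hA).map (LinearEquiv.ofEq _ _ h)
  refine ⟨(bB.toMatrix bA)ᵀ, ?_, ?_⟩
  · have := bB.invertibleToMatrix bA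
    exact (isUnit_transpose _).mpr (isUnit_of_invertible _)
  · ext i j
    have := congrFun (congrArg Subtype.val (bB.sum_toMatrix_smul_self bA i)) j
    simp only [bA, bB, Module.Basis.map_apply, LinearEquiv.coe_ofEq_apply, Module.Basis.span_apply,
      SetLike.mk_smul_mk, AddSubmonoidClass.coe_finsetSum, Finset.sum_apply, Pi.smul_apply,
      row_apply, smul_eq_mul] at this
    simpa [mul_apply] using this.symm

theorem span_range_eq_map_vecMulLinear_iff [Fintype n] [DecidableEq n]
    {M M' : Matrix m n R} (hM : LinearIndependent R M.row) (hM' : LinearIndependent R M'.row)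
    {D : Matrix n n R} (hD : IsUnit D) :
    span R (range M'.row) = (span R (range M.row)).map D.vecMulLinear ↔
      ∃ S : Matrix m m R, IsUnit S ∧ M' = S⁻¹ * M * D := by
  constructor
  · intro h
    rw [← span_range_mul] at h
    have hMD : LinearIndependent R (M * D).row :=
      hM.map' D.vecMulLinear (LinearMap.ker_eq_bot.mpr (vecMul_injective_of_isUnit hD))
    obtain ⟨S, hS, rfl⟩ := exists_isUnit_eq_mul_of_span_range_eq hM' hMD h
    refine ⟨S⁻¹, isUnit_nonsing_inv_iff.mpr hS, ?_⟩
    rw [nonsing_inv_nonsing_inv S ((isUnit_iff_isUnit_det S).mp hS), Matrix.mul_assoc]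
  · rintro ⟨S, hS, rfl⟩
    rw [span_range_mul, span_range_isUnit_mul (isUnit_nonsing_inv_iff.mpr hS)]

theorem isUnit_diagonal_units [Fintype n] [DecidableEq n] (d : n → Rˣ) :
    IsUnit (diagonal (Units.val ∘ d)) :=
  isUnit_diagonal.mpr (Pi.isUnit_iff.mpr fun j => (d j).isUnit)

end Matrix

open Matrix

section Normalizer

variable {p k : ℕ}

theorem gperm_injective : Function.Injective (gperm (p := p) (k := k)) := by
  intro v w h
  funext j
  simpa [gperm] using congrArg (fun g => (g (j, 0)).2) h

theorem coe_Hsub (C : Submodule (ZMod p) (Fin k → ZMod p)) :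
    (Hsub C : Set (Equiv.Perm (Fin k × ZMod p))) = gperm '' C := by
  ext g
  simp [Hsub, eq_comm]

theorem coe_Hsub_inj {C D : Submodule (ZMod p) (Fin k → ZMod p)} :
    (Hsub C : Set (Equiv.Perm (Fin k × ZMod p))) = Hsub D ↔ C = D := by
  rw [coe_Hsub, coe_Hsub, (Set.image_injective.mpr gperm_injective).eq_iff, SetLike.coe_set_eq]

theorem sigmaPerm_mul_gperm_mul_inv (a : Fin k → (ZMod p)ˣ) (b : Fin k → ZMod p)
    (π : Equiv.Perm (Fin k)) (v : Fin k → ZMod p) :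
    sigmaPerm a b π * gperm v * (sigmaPerm a b π)⁻¹ =
      gperm ((LinearEquiv.funCongrLeft (ZMod p) (ZMod p) π).symm
        (v ᵥ* diagonal (Units.val ∘ a))) := by
  rw [mul_inv_eq_iff_eq_mul]
  ext ⟨i, x⟩
  · simp [sigmaPerm, gperm]
  · simp only [sigmaPerm, affineEquiv, gperm, Equiv.Perm.coe_mul, Equiv.prodShear_apply,
      Equiv.coe_fn_mk, Equiv.refl_apply, Equiv.coe_addRight, Function.comp_apply,
      LinearEquiv.funCongrLeft_symm, LinearEquiv.funCongrLeft_apply, LinearMap.funLeft_apply,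
      vecMul_diagonal, Equiv.symm_apply_apply]
    ring

theorem sigmaPerm_normalizes_Hsub_iff (a : Fin k → (ZMod p)ˣ) (b : Fin k → ZMod p)
    (π : Equiv.Perm (Fin k)) (C : Submodule (ZMod p) (Fin k → ZMod p)) :
    (fun g => sigmaPerm a b π * g * (sigmaPerm a b π)⁻¹) ''
        (Hsub C : Set (Equiv.Perm (Fin k × ZMod p))) = Hsub C ↔
      C.map (LinearEquiv.funCongrLeft (ZMod p) (ZMod p) π).toLinearMap =
        C.map (diagonal (Units.val ∘ a)).vecMulLinear := by
  have himage : (fun g => sigmaPerm a b π * g * (sigmaPerm a b π)⁻¹) ''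
      (Hsub C : Set (Equiv.Perm (Fin k × ZMod p))) =
        Hsub ((C.map (diagonal (Units.val ∘ a)).vecMulLinear).map
          (LinearEquiv.funCongrLeft (ZMod p) (ZMod p) π).symm.toLinearMap) := by
    simp only [coe_Hsub, Set.image_image, sigmaPerm_mul_gperm_mul_inv, Submodule.map_coe]
    rfl
  rw [himage, coe_Hsub_inj, Submodule.map_symm_eq_iff]

end Normalizer

theorem stmt6_general {p k s : ℕ}
    (C C' : Submodule (ZMod p) (Fin k → ZMod p))
    (π : Equiv.Perm (Fin k))
    (hC' : ∀ w : Fin k → ZMod p, w ∈ C' ↔ ∃ v ∈ C, w = v ∘ π)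
    (M M' : Fin s → (Fin k → ZMod p))
    (hMli : LinearIndependent (ZMod p) M)
    (hMsp : Submodule.span (ZMod p) (Set.range M) = C)
    (hM'li : LinearIndependent (ZMod p) M')
    (hM'sp : Submodule.span (ZMod p) (Set.range M') = C') :
    (∃ (a : Fin k → (ZMod p)ˣ) (b : Fin k → ZMod p),
        (fun g => sigmaPerm a b π * g * (sigmaPerm a b π)⁻¹) ''
            (Hsub C : Set (Equiv.Perm (Fin k × ZMod p)))
          = (Hsub C : Set (Equiv.Perm (Fin k × ZMod p))))
    ↔ ∃ R : Matrix (Fin s) (Fin s) (ZMod p), IsUnit R ∧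
        ∃ d : Fin k → (ZMod p)ˣ,
          ∀ (i : Fin s) (j : Fin k),
            M' i j = (∑ l : Fin s, R⁻¹ i l * M l j) * (d j : ZMod p) := by
  have hC'_eq : C' = C.map (LinearEquiv.funCongrLeft (ZMod p) (ZMod p) π).toLinearMap := by
    ext w
    simp only [hC', mem_map, LinearEquiv.coe_coe, LinearEquiv.funCongrLeft_apply, eq_comm (a := w)]
    rfl
  have hcode (d : Fin k → (ZMod p)ˣ) : C' = C.map (diagonal (Units.val ∘ d)).vecMulLinear ↔
      ∃ R : Matrix (Fin s) (Fin s) (ZMod p), IsUnit R ∧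
        of M' = R⁻¹ * of M * diagonal (Units.val ∘ d) := by
    rw [← hM'sp, ← hMsp]
    exact span_range_eq_map_vecMulLinear_iff hMli hM'li (isUnit_diagonal_units d)
  have hentry (R : Matrix (Fin s) (Fin s) (ZMod p)) (d : Fin k → (ZMod p)ˣ) :
      of M' = R⁻¹ * of M * diagonal (Units.val ∘ d) ↔
        ∀ i j, M' i j = (∑ l, R⁻¹ i l * M l j) * (d j : ZMod p) := by
    rw [← Matrix.ext_iff]
    simp only [mul_diagonal, Function.comp_apply]
    simp only [mul_apply, of_apply]
  simp only [sigmaPerm_normalizes_Hsub_iff, ← hC'_eq]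
  constructor
  · rintro ⟨a, -, ha⟩
    obtain ⟨R, hR, hM'⟩ := (hcode a).mp ha
    exact ⟨R, hR, a, (hentry R a).mp hM'⟩
  · rintro ⟨R, hR, d, hd⟩
    exact ⟨d, 0, (hcode d).mpr ⟨R, hR, (hentry R d).mpr hd⟩⟩

/-- For a code `C` of dimension `s` with bases `M` of `C` and `M'` of `C' = {v ∘ π | v ∈ C}`:
some `σ_{a,b,π}` normalizes `H_C` iff `M' = R⁻¹ M d` for an invertible `s × s` matrix `R`
and diagonal scaling `d`. -/
theorem stmt6 {p k s : ℕ} (hp : p.Prime)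
    (C C' : Submodule (ZMod p) (Fin k → ZMod p))
    (hdim : Module.finrank (ZMod p) C = s)
    (π : Equiv.Perm (Fin k))
    (hC' : ∀ w : Fin k → ZMod p, w ∈ C' ↔ ∃ v ∈ C, w = v ∘ π)
    (M M' : Fin s → (Fin k → ZMod p))
    (hMli : LinearIndependent (ZMod p) M)
    (hMsp : Submodule.span (ZMod p) (Set.range M) = C)
    (hM'li : LinearIndependent (ZMod p) M')
    (hM'sp : Submodule.span (ZMod p) (Set.range M') = C') :
    (∃ (a : Fin k → (ZMod p)ˣ) (b : Fin k → ZMod p),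
        (fun g => sigmaPerm a b π * g * (sigmaPerm a b π)⁻¹) ''
            (Hsub C : Set (Equiv.Perm (Fin k × ZMod p)))
          = (Hsub C : Set (Equiv.Perm (Fin k × ZMod p))))
    ↔ ∃ R : Matrix (Fin s) (Fin s) (ZMod p), IsUnit R ∧
        ∃ d : Fin k → (ZMod p)ˣ,
          ∀ (i : Fin s) (j : Fin k),
            M' i j = (∑ l : Fin s, R⁻¹ i l * M l j) * (d j : ZMod p) :=
  stmt6_general C C' π hC' M M' hMli hMsp hM'li hM'sp
end

section
/- Let s ≤ k, let ι : Fin s → Fin k be the natural inclusion (Fin.castLE), and let M : Fin s → (Fin k → ZMod p) be in standard form, i.e., M i (ι j) = 1 if i = j and 0 otherwise. Let C be the span of the rows M i, and assume C has full support. Let u : Fin k with u not in the range of ι, let f : Fin s → Fin k be injective, and let fu : Fin k with fu not in the range of f. Suppose there exists i : Fin s such that M i fu ≠ 0 and M i (f j) * M j u = 0 for all j : Fin s. Then there is no permutation σ of Ω such that σ * H_C * σ⁻¹ = H_C, σ maps the ι j-th fiber onto the f j-th fiber for every j : Fin s, and σ maps the u-th fiber onto the fu-th fiber. -/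
/-! Since `σ` normalizes `H_C`, it conjugates some `g_w` with `w ∈ C` to `g_{M i}`. Conjugation
carries fixed points to fixed points, and `g_v` fixes exactly the fibers on which `v` vanishes, so
if `σ` maps fiber `a` onto fiber `b` then `w a = 0 ↔ M i b = 0`. In standard form
`w = ∑ j, w (ι j) • M j`, and each term vanishes at `u`: either `M i (f j) = 0`, whence
`w (ι j) = 0`, or `M j u = 0`. So `w u = 0`, which forces `M i fu = 0`. -/

@[simp]
lemma gperm_apply {p k : ℕ} (v : Fin k → ZMod p) (ω : Fin k × ZMod p) :
    gperm v ω = (ω.1, ω.2 + v ω.1) :=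
  rfl

lemma gperm_apply_eq_self_iff {p k : ℕ} (v : Fin k → ZMod p) (ω : Fin k × ZMod p) :
    gperm v ω = ω ↔ v ω.1 = 0 := by
  simp [Prod.ext_iff]

lemma apply_eq_zero_iff_of_conj_eq {p k : ℕ} {σ : Equiv.Perm (Fin k × ZMod p)}
    {v w : Fin k → ZMod p} (hconj : σ * gperm w * σ⁻¹ = gperm v) (ω : Fin k × ZMod p) :
    w ω.1 = 0 ↔ v (σ ω).1 = 0 := by
  rw [← gperm_apply_eq_self_iff, ← gperm_apply_eq_self_iff, ← hconj]
  simp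

lemma apply_eq_zero_iff_of_conj_eq_of_image_fiber {p k : ℕ} {σ : Equiv.Perm (Fin k × ZMod p)}
    {v w : Fin k → ZMod p} (hconj : σ * gperm w * σ⁻¹ = gperm v) {a b : Fin k}
    (hab : ⇑σ '' {ω | ω.1 = a} = {ω | ω.1 = b}) :
    w a = 0 ↔ v b = 0 := by
  have hσ : (σ (a, 0)).1 = b := by
    have : σ (a, 0) ∈ ⇑σ '' {ω | ω.1 = a} := Set.mem_image_of_mem σ rfl
    rwa [hab] at this
  simpa [hσ] using apply_eq_zero_iff_of_conj_eq hconj (a, 0)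

lemma eq_sum_smul_of_mem_span_of_standard {R S K : Type*} [CommSemiring R] [Fintype S]
    [DecidableEq S] {M : S → K → R} {ι : S → K}
    (hstd : ∀ i j, M i (ι j) = if i = j then 1 else 0) {w : K → R}
    (hw : w ∈ Submodule.span R (Set.range M)) :
    w = ∑ j, w (ι j) • M j := by
  obtain ⟨c, rfl⟩ := (Submodule.mem_span_range_iff_exists_fun R).mp hw
  congr! with j
  simp [Finset.sum_apply, hstd]

theorem stmt14_general {p k s : ℕ} (hp : p.Prime) (hsk : s ≤ k)
    (M : Fin s → (Fin k → ZMod p))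
    (hstd : ∀ i j : Fin s, M i (Fin.castLE hsk j) = if i = j then 1 else 0)
    (C : Submodule (ZMod p) (Fin k → ZMod p))
    (hC : C = Submodule.span (ZMod p) (Set.range M))
    (u : Fin k)
    (f : Fin s → Fin k)
    (fu : Fin k)
    (i : Fin s) (hi1 : M i fu ≠ 0) (hi2 : ∀ j : Fin s, M i (f j) * M j u = 0) :
    ¬ ∃ σ : Equiv.Perm (Fin k × ZMod p),
        (fun g => σ * g * σ⁻¹) '' (Hsub C : Set (Equiv.Perm (Fin k × ZMod p)))
            = (Hsub C : Set (Equiv.Perm (Fin k × ZMod p)))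
        ∧ (∀ j : Fin s,
            ⇑σ '' {ω : Fin k × ZMod p | ω.1 = Fin.castLE hsk j}
              = {ω : Fin k × ZMod p | ω.1 = f j})
        ∧ ⇑σ '' {ω : Fin k × ZMod p | ω.1 = u} = {ω : Fin k × ZMod p | ω.1 = fu} := by
  rintro ⟨σ, hnorm, hfib, hufib⟩
  have := Fact.mk hp
  have hMi : gperm (M i) ∈ (fun g => σ * g * σ⁻¹) '' (Hsub C : Set _) := by
    rw [hnorm]
    exact ⟨M i, hC ▸ Submodule.subset_span ⟨i, rfl⟩, rfl⟩
  obtain ⟨_, ⟨w, hwC, rfl⟩, hconj⟩ := hMi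
  have hwu : w u = 0 := by
    rw [eq_sum_smul_of_mem_span_of_standard (w := w) hstd (hC ▸ hwC), Finset.sum_apply]
    refine Finset.sum_eq_zero fun j _ => ?_
    rcases mul_eq_zero.mp (hi2 j) with h | h
    · simp [(apply_eq_zero_iff_of_conj_eq_of_image_fiber hconj (hfib j)).mpr h]
    · simp [h]
  exact hi1 ((apply_eq_zero_iff_of_conj_eq_of_image_fiber hconj hufib).mp hwu)

/-- Pruning lemma: under the stated zero-pattern condition on the standard-form generator
matrix `M`, no normalizing permutation maps the `ι j`-th fiber to the `f j`-th fiber for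
all `j` and the `u`-th fiber to the `fu`-th fiber. -/
theorem stmt14 {p k s : ℕ} (hp : p.Prime) (hsk : s ≤ k)
    (M : Fin s → (Fin k → ZMod p))
    (hstd : ∀ i j : Fin s, M i (Fin.castLE hsk j) = if i = j then 1 else 0)
    (C : Submodule (ZMod p) (Fin k → ZMod p))
    (hC : C = Submodule.span (ZMod p) (Set.range M))
    (hfull : ∀ i : Fin k, ∃ v ∈ C, v i ≠ 0)
    (u : Fin k) (hu : u ∉ Set.range (Fin.castLE hsk))
    (f : Fin s → Fin k) (hf : Function.Injective f)
    (fu : Fin k) (hfu : fu ∉ Set.range f)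
    (i : Fin s) (hi1 : M i fu ≠ 0) (hi2 : ∀ j : Fin s, M i (f j) * M j u = 0) :
    ¬ ∃ σ : Equiv.Perm (Fin k × ZMod p),
        (fun g => σ * g * σ⁻¹) '' (Hsub C : Set (Equiv.Perm (Fin k × ZMod p)))
            = (Hsub C : Set (Equiv.Perm (Fin k × ZMod p)))
        ∧ (∀ j : Fin s,
            ⇑σ '' {ω : Fin k × ZMod p | ω.1 = Fin.castLE hsk j}
              = {ω : Fin k × ZMod p | ω.1 = f j})
        ∧ ⇑σ '' {ω : Fin k × ZMod p | ω.1 = u} = {ω : Fin k × ZMod p | ω.1 = fu} :=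
  stmt14_general hp hsk M hstd C hC u f fu i hi1 hi2
end
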